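/- arXiv:math/9805015 — 5 statements merged into one kernel-verified Lean document; each statement's English description precedes it below -/
import Mathlib

section
/- For every n ≥ 2 there is a bijection from {1,2,3} × PT(n) onto the disjoint union LT(n+1) ⊔ IT(n−1), where PT(n) is the set of pointed well-weighted binary trees with n leaves, LT(n+1) the set of leaf-pointed well-weighted binary trees with n+1 leaves, and IT(n−1) the set of interior-pointed well-weighted binary trees with n−1 leaves. -/
/-- A weighted binary plane tree: a leaf or a root with weight `r` and two subtrees. -/
inductive WTree : Type
  | leaf : WTree
  | node : ℕ → WTree → WTree → WTree

/-- Number of leaves. -/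
def WTree.leaves : WTree → ℕ
  | .leaf => 1
  | .node _ t₁ t₂ => t₁.leaves + t₂.leaves

/-- Well-weighted: each weight is 1 or 2, and weight 2 forbids a right son which is a leaf. -/
def WTree.wellWeighted : WTree → Prop
  | .leaf => True
  | .node r t₁ t₂ => (r = 1 ∨ r = 2) ∧ (t₂ = .leaf → r = 1) ∧ t₁.wellWeighted ∧ t₂.wellWeighted

/-- The number of well-weighted binary trees with `n` leaves. -/
noncomputable def wwS (n : ℕ) : ℕ :=
  Nat.card {t : WTree // t.wellWeighted ∧ t.leaves = n}

/-- Nodes of a weighted binary tree, as paths from the root. -/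
inductive WPath : WTree → Type
  | root (t : WTree) : WPath t
  | left {r : ℕ} {t₁ t₂ : WTree} : WPath t₁ → WPath (.node r t₁ t₂)
  | right {r : ℕ} {t₁ t₂ : WTree} : WPath t₂ → WPath (.node r t₁ t₂)

/-- The subtree rooted at a given node. -/
def WPath.target : {t : WTree} → WPath t → WTree
  | _, .root t => t
  | _, .left p => p.target
  | _, .right p => p.target

/-- Pointed well-weighted trees with `n` leaves. -/
def PTn (n : ℕ) : Type :=
  {x : Σ t : WTree, WPath t // x.1.wellWeighted ∧ x.1.leaves = n}

/-- Leaf-pointed well-weighted trees with `n` leaves. -/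
def LTn (n : ℕ) : Type :=
  {x : Σ t : WTree, WPath t // x.1.wellWeighted ∧ x.1.leaves = n ∧ x.2.target = .leaf}

/-- Interior-pointed well-weighted trees with `n` leaves. -/
def ITn (n : ℕ) : Type :=
  {x : Σ t : WTree, WPath t // x.1.wellWeighted ∧ x.1.leaves = n ∧ x.2.target ≠ .leaf}

/-!
A pointed tree is stored as a zipper `(c, s)`: the pointed subtree `s` together with the frames
`c` leading from it to the root, innermost first. Call `(c, s)` weak if `s` and every frame are
well weighted; this forgets only the condition between `s` and its parent, so a weak zipper fails
to be a pointed tree exactly when `s` is a leaf and the right child of a node of weight 2.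
Write `P`, `L`, `I`, `W` for pointed, leaf-pointed, interior-pointed and weak zippers. Replacing
the pointed subtree `s` by a node whose children are `s` and a new pointed leaf `•` gives
* `W(n+1) = P(n+1) ⊔ W(n)`, grafting `[2; s, •]`;
* `L(m+1) = W(m) ⊔ W(m) ⊔ I(m)` for `m ≥ 1`, grafting `[1; s, •]`, `[1; •, s]`,
  `[2; •, s]`;
* `P(n) = L(n) ⊔ I(n)`.
For `n = m + 1` these combine to
`3 P(n) = 2 P(n) + L(n) + I(n) = 2 (P(n) + W(m)) + I(n) + I(m) = 2 W(n) + I(n) + I(m)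
= L(n+1) + I(m)`.
-/

def finThreeProdEquiv (α : Type*) : Fin 3 × α ≃ (α ⊕ α) ⊕ α :=
  ((finSumFinEquiv (m := 2) (n := 1)).symm.prodCongr (.refl α)).trans <|
    (Equiv.sumProdDistrib _ _ _).trans <|
      Equiv.sumCongr ((finTwoEquiv.prodCongr (.refl α)).trans (Equiv.boolProdEquivSum α))
        (Equiv.uniqueProd α _)

noncomputable def equivSumOfEqUnion {α : Type*} {s t u : Set α} (h : s = t ∪ u)
    (hd : Disjoint t u) : s ≃ t ⊕ u := by
  classical exact (Equiv.setCongr h).trans (Equiv.Set.union hd)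

/-- `L r sib` (resp. `R r sib`): the focus is the left (resp. right) child of a node of weight `r`
whose other child is `sib`. -/
inductive Frame : Type
  | L (r : ℕ) (sib : WTree)
  | R (r : ℕ) (sib : WTree)

namespace Frame

def fill : Frame → WTree → WTree
  | L r sib, s => .node r s sib
  | R r sib, s => .node r sib s

def sibling : Frame → WTree
  | L _ sib | R _ sib => sib

def WellWeighted : Frame → Prop
  | L r sib => (r = 1 ∨ r = 2) ∧ (sib = .leaf → r = 1) ∧ sib.wellWeighted
  | R r sib => (r = 1 ∨ r = 2) ∧ sib.wellWeighted

def AdmitsLeaf : Frame → Prop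
  | L _ _ => True
  | R r _ => r = 1

theorem wellWeighted_fill (f : Frame) (s : WTree) :
    (f.fill s).wellWeighted ↔
      f.WellWeighted ∧ s.wellWeighted ∧ (s = .leaf → f.AdmitsLeaf) := by
  cases f <;> simp only [fill, WTree.wellWeighted, WellWeighted, AdmitsLeaf] <;> tauto

theorem leaves_fill (f : Frame) (s : WTree) : (f.fill s).leaves = s.leaves + f.sibling.leaves := by
  cases f <;> simp only [fill, sibling, WTree.leaves, Nat.add_comm]

end Frame

abbrev Zipper : Type := List Frame × WTree

def WPath.unzip : {t : WTree} → WPath t → List Frame → Zipper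
  | _, .root t, acc => (acc, t)
  | _, .left (r := r) (t₂ := t₂) p, acc => p.unzip (.L r t₂ :: acc)
  | _, .right (r := r) (t₁ := t₁) p, acc => p.unzip (.R r t₁ :: acc)

namespace Zipper

def plug : List Frame → WTree → WTree
  | [], s => s
  | f :: c, s => plug c (f.fill s)

def liftPath : (c : List Frame) → {s : WTree} → WPath s → WPath (plug c s)
  | [], _, p => p
  | .L _ _ :: c, _, p => liftPath c (.left p)
  | .R _ _ :: c, _, p => liftPath c (.right p)

theorem target_liftPath (c : List Frame) {s : WTree} (p : WPath s) :
    (liftPath c p).target = p.target := by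
  induction c generalizing s with
  | nil => rfl
  | cons f c ih => cases f <;> exact ih _

theorem unzip_liftPath (c : List Frame) {s : WTree} (p : WPath s) (acc : List Frame) :
    (liftPath c p).unzip acc = p.unzip (c ++ acc) := by
  induction c generalizing s with
  | nil => rfl
  | cons f c ih => cases f <;> exact ih _

theorem liftPath_unzip {t : WTree} (p : WPath t) (acc : List Frame) :
    (⟨_, liftPath (p.unzip acc).1 (.root (p.unzip acc).2)⟩ : Σ t, WPath t) =
      ⟨_, liftPath acc p⟩ := by
  induction p generalizing acc with
  | root t => rfl
  | left p ih => exact ih _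
  | right p ih => exact ih _

def equivPointed : Zipper ≃ Σ t, WPath t where
  toFun z := ⟨_, liftPath z.1 (.root z.2)⟩
  invFun x := x.2.unzip []
  left_inv z := by simp [unzip_liftPath, WPath.unzip]
  right_inv x := liftPath_unzip x.2 []

def equivSubtype (P : WTree → WTree → Prop) :
    {z : Zipper // P (plug z.1 z.2) z.2} ≃ {x : Σ t, WPath t // P x.1 x.2.target} :=
  equivPointed.subtypeEquiv fun z => by
    rw [show (equivPointed z).2.target = z.2 from target_liftPath _ _]; rfl

theorem wellWeighted_plug (c : List Frame) (s : WTree) :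
    (plug c s).wellWeighted ↔
      (∀ f ∈ c, f.WellWeighted) ∧ s.wellWeighted ∧
        (s = .leaf → ∀ f ∈ c.head?, f.AdmitsLeaf) := by
  induction c generalizing s with
  | nil => simp [plug]
  | cons f c ih =>
    have : f.fill s ≠ .leaf := by cases f <;> simp [Frame.fill]
    simp only [plug, ih, Frame.wellWeighted_fill, this, IsEmpty.forall_iff, and_true,
      List.forall_mem_cons, List.head?_cons, Option.mem_def, Option.some.injEq, forall_eq']
    tauto

theorem leaves_plug (c : List Frame) (s : WTree) :
    (plug c s).leaves = s.leaves + (c.map fun f => f.sibling.leaves).sum := by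
  induction c generalizing s with
  | nil => simp [plug]
  | cons f c ih => simp only [plug, ih, Frame.leaves_fill, List.map_cons, List.sum_cons]; omega

theorem leaves_plug_cons_leaf (f : Frame) (c : List Frame) :
    (plug (f :: c) .leaf).leaves = (plug c f.sibling).leaves + 1 := by
  rw [plug, leaves_plug, leaves_plug, Frame.leaves_fill, WTree.leaves]
  omega

def pointed (n : ℕ) : Set Zipper :=
  {z | (plug z.1 z.2).wellWeighted ∧ (plug z.1 z.2).leaves = n}

def leafPointed (n : ℕ) : Set Zipper :=
  {z | (plug z.1 z.2).wellWeighted ∧ (plug z.1 z.2).leaves = n ∧ z.2 = .leaf}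

def interiorPointed (n : ℕ) : Set Zipper :=
  {z | (plug z.1 z.2).wellWeighted ∧ (plug z.1 z.2).leaves = n ∧ z.2 ≠ .leaf}

def weak (n : ℕ) : Set Zipper :=
  {z | (∀ f ∈ z.1, f.WellWeighted) ∧ z.2.wellWeighted ∧ (plug z.1 z.2).leaves = n}

def graft (f : WTree → Frame) (z : Zipper) : Zipper := (f z.2 :: z.1, .leaf)

theorem graft_injective {f : WTree → Frame} (hf : f.Injective) : (graft f).Injective := by
  rintro ⟨c, s⟩ ⟨c', s'⟩ h
  simp only [graft, Prod.mk.injEq, List.cons.injEq] at h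
  rw [hf h.1.1, h.1.2]

theorem disjoint_image_graft {f g : WTree → Frame} (hfg : ∀ s s', f s ≠ g s')
    (S T : Set Zipper) :
    Disjoint (graft f '' S) (graft g '' T) := by
  rw [Set.disjoint_left]
  rintro _ ⟨z, -, rfl⟩ ⟨w, -, h⟩
  simp only [graft, Prod.mk.injEq, List.cons.injEq] at h
  exact hfg _ _ h.1.1.symm

theorem pointed_eq_union (n : ℕ) : pointed n = leafPointed n ∪ interiorPointed n := by
  ext z
  simp only [pointed, leafPointed, interiorPointed, Set.mem_union, Set.mem_ofPred_eq]
  tauto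

theorem disjoint_leafPointed_interiorPointed (n : ℕ) :
    Disjoint (leafPointed n) (interiorPointed n) :=
  Set.disjoint_left.2 fun _ h h' => h'.2.2 h.2.2

theorem mem_pointed {z : Zipper} {n : ℕ} :
    z ∈ pointed n ↔ z ∈ weak n ∧ (z.2 = .leaf → ∀ f ∈ z.1.head?, f.AdmitsLeaf) := by
  simp only [pointed, weak, Set.mem_ofPred_eq, wellWeighted_plug]
  tauto

theorem cons_leaf_mem_weak {f : Frame} {c : List Frame} {n : ℕ} :
    (f :: c, .leaf) ∈ weak (n + 1) ↔
      (∀ g ∈ f :: c, g.WellWeighted) ∧ (plug c f.sibling).leaves = n := by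
  simp only [weak, Set.mem_ofPred_eq, leaves_plug_cons_leaf, Nat.add_right_cancel_iff]
  exact ⟨fun h => ⟨h.1, h.2.2⟩, fun h => ⟨h.1, trivial, h.2⟩⟩

theorem cons_leaf_mem_leafPointed {f : Frame} {c : List Frame} {n : ℕ} :
    (f :: c, .leaf) ∈ leafPointed (n + 1) ↔
      (∀ g ∈ f :: c, g.WellWeighted) ∧ f.AdmitsLeaf ∧ (plug c f.sibling).leaves = n := by
  simp [leafPointed, wellWeighted_plug, leaves_plug_cons_leaf, WTree.wellWeighted, and_assoc]

theorem weak_succ (n : ℕ) : weak (n + 1) = pointed (n + 1) ∪ graft (.R 2) '' weak n := by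
  ext z
  constructor
  · obtain ⟨c, s⟩ := z
    intro h
    by_cases hadm : s = .leaf → ∀ f ∈ c.head?, f.AdmitsLeaf
    · exact .inl (mem_pointed.2 ⟨h, hadm⟩)
    obtain ⟨rfl, hbad⟩ := Classical.not_imp.1 hadm
    rcases c with _ | ⟨_ | ⟨r, a⟩, c⟩
    · simp at hbad
    · simp [Frame.AdmitsLeaf] at hbad
    obtain ⟨hfc, hn⟩ := cons_leaf_mem_weak.1 h
    obtain ⟨⟨hr, ha⟩, hc⟩ := List.forall_mem_cons.1 hfc
    obtain rfl : r = 2 := hr.resolve_left (by simpa [Frame.AdmitsLeaf] using hbad)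
    exact .inr ⟨(c, a), ⟨hc, ha, hn⟩, rfl⟩
  · rintro (h | ⟨⟨c, s⟩, ⟨hc, hs, hn⟩, rfl⟩)
    · exact (mem_pointed.1 h).1
    exact cons_leaf_mem_weak.2 ⟨List.forall_mem_cons.2 ⟨⟨.inr rfl, hs⟩, hc⟩, hn⟩

theorem disjoint_pointed_graft (n : ℕ) : Disjoint (pointed (n + 1)) (graft (.R 2) '' weak n) := by
  rw [Set.disjoint_left]
  rintro _ h ⟨z, -, rfl⟩
  simpa [graft, Frame.AdmitsLeaf] using (mem_pointed.1 h).2 rfl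

theorem leafPointed_succ {m : ℕ} (hm : 1 ≤ m) :
    leafPointed (m + 1) =
      (graft (.R 1) '' weak m ∪ graft (.L 1) '' weak m) ∪
        graft (.L 2) '' interiorPointed m := by
  ext z
  constructor
  · obtain ⟨c, s⟩ := z
    intro h
    obtain rfl : s = .leaf := h.2.2
    rcases c with _ | ⟨f, c⟩
    · simp [leafPointed, plug, WTree.leaves] at h
      omega
    rw [cons_leaf_mem_leafPointed, List.forall_mem_cons] at h
    obtain ⟨⟨hf, hc⟩, hadm, hn⟩ := h
    cases f with
    | R r a =>
      obtain rfl : r = 1 := hadm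
      exact .inl (.inl ⟨(c, a), ⟨hc, hf.2, hn⟩, rfl⟩)
    | L r b =>
      obtain ⟨rfl | rfl, hb, hbww⟩ := hf
      · exact .inl (.inr ⟨(c, b), ⟨hc, hbww, hn⟩, rfl⟩)
      · have hb : b ≠ .leaf := fun h => absurd (hb h) (by norm_num)
        exact .inr
          ⟨(c, b), ⟨(wellWeighted_plug c b).2 ⟨hc, hbww, (absurd · hb)⟩, hn, hb⟩, rfl⟩
  · rintro ((⟨⟨c, s⟩, ⟨hc, hs, hn⟩, rfl⟩ | ⟨⟨c, s⟩, ⟨hc, hs, hn⟩, rfl⟩) |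
      ⟨⟨c, s⟩, ⟨hww, hn, hs⟩, rfl⟩)
    · exact cons_leaf_mem_leafPointed.2
        ⟨List.forall_mem_cons.2 ⟨⟨.inl rfl, hs⟩, hc⟩, rfl, hn⟩
    · exact cons_leaf_mem_leafPointed.2
        ⟨List.forall_mem_cons.2 ⟨⟨.inl rfl, fun _ => rfl, hs⟩, hc⟩, trivial, hn⟩
    · obtain ⟨hc, hs', -⟩ := (wellWeighted_plug c s).1 hww
      exact cons_leaf_mem_leafPointed.2
        ⟨List.forall_mem_cons.2 ⟨⟨.inr rfl, (absurd · hs), hs'⟩, hc⟩, trivial, hn⟩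

noncomputable def imageGraftEquiv {f : WTree → Frame} (hf : f.Injective) (S : Set Zipper) :
    graft f '' S ≃ S :=
  (Equiv.Set.image _ S (graft_injective hf)).symm

noncomputable def pointedEquiv (n : ℕ) : pointed n ≃ leafPointed n ⊕ interiorPointed n :=
  equivSumOfEqUnion (pointed_eq_union n) (disjoint_leafPointed_interiorPointed n)

noncomputable def weakSuccEquiv (n : ℕ) : weak (n + 1) ≃ pointed (n + 1) ⊕ weak n :=
  (equivSumOfEqUnion (weak_succ n) (disjoint_pointed_graft n)).trans <|
    Equiv.sumCongr (.refl _) (imageGraftEquiv (fun _ _ h => (Frame.R.inj h).2) _)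

noncomputable def leafPointedSuccEquiv {m : ℕ} (hm : 1 ≤ m) :
    leafPointed (m + 1) ≃ (weak m ⊕ weak m) ⊕ interiorPointed m :=
  (equivSumOfEqUnion (leafPointed_succ hm)
      (.union_left (disjoint_image_graft (by simp) _ _)
        (disjoint_image_graft (by simp) _ _))).trans <|
    Equiv.sumCongr
      ((equivSumOfEqUnion rfl (disjoint_image_graft (by simp) _ _)).trans <| Equiv.sumCongr
        (imageGraftEquiv (fun _ _ h => (Frame.R.inj h).2) _)
        (imageGraftEquiv (fun _ _ h => (Frame.L.inj h).2) _))
      (imageGraftEquiv (fun _ _ h => (Frame.L.inj h).2) _)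

def ptnEquiv (n : ℕ) : pointed n ≃ PTn n :=
  equivSubtype fun t _ => t.wellWeighted ∧ t.leaves = n

def ltnEquiv (n : ℕ) : leafPointed n ≃ LTn n :=
  equivSubtype fun t s => t.wellWeighted ∧ t.leaves = n ∧ s = .leaf

def itnEquiv (n : ℕ) : interiorPointed n ≃ ITn n :=
  equivSubtype fun t s => t.wellWeighted ∧ t.leaves = n ∧ s ≠ .leaf

end Zipper

/-- For every `n ≥ 2` there is a bijection from `{1,2,3} × PT(n)` onto
`LT(n+1) ⊔ IT(n-1)`. -/
theorem pointed_trees_bijection (n : ℕ) (hn : 2 ≤ n) :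
    Nonempty ((Fin 3 × PTn n) ≃ (LTn (n + 1) ⊕ ITn (n - 1))) := by
  obtain ⟨m, rfl⟩ : ∃ m, n = m + 1 := ⟨n - 1, by omega⟩
  have hm : 1 ≤ m := by omega
  open Zipper in
  exact ⟨calc
    Fin 3 × PTn (m + 1) ≃ (pointed (m + 1) ⊕ pointed (m + 1)) ⊕ pointed (m + 1) :=
      ((Equiv.refl _).prodCongr (ptnEquiv _).symm).trans (finThreeProdEquiv _)
    _ ≃ (pointed (m + 1) ⊕ pointed (m + 1)) ⊕
          (((weak m ⊕ weak m) ⊕ interiorPointed m) ⊕ interiorPointed (m + 1)) :=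
      Equiv.sumCongr (.refl _) <|
        (pointedEquiv _).trans (Equiv.sumCongr (leafPointedSuccEquiv hm) (.refl _))
    _ ≃ ((pointed (m + 1) ⊕ weak m) ⊕ (pointed (m + 1) ⊕ weak m)) ⊕
          (interiorPointed (m + 1) ⊕ interiorPointed m) :=
      (Equiv.sumCongr (.refl _) (Equiv.sumAssoc _ _ _)).trans <|
        (Equiv.sumAssoc _ _ _).symm.trans <|
          Equiv.sumCongr (Equiv.sumSumSumComm _ _ _ _) (Equiv.sumComm _ _)
    _ ≃ ((weak (m + 1) ⊕ weak (m + 1)) ⊕ interiorPointed (m + 1)) ⊕ interiorPointed m :=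
      (Equiv.sumCongr (Equiv.sumCongr (weakSuccEquiv m).symm (weakSuccEquiv m).symm)
        (.refl _)).trans (Equiv.sumAssoc _ _ _).symm
    _ ≃ LTn (m + 1 + 1) ⊕ ITn (m + 1 - 1) :=
      Equiv.sumCongr ((leafPointedSuccEquiv (by omega)).symm.trans (ltnEquiv _)) (itnEquiv m)⟩
end

section
/- The sequence s(n) counting well-weighted binary trees with n leaves satisfies s(1) = s(2) = 1 and s(n+1) = Σ_{k=1}^{n} 2·s(k)·s(n+1−k) − s(n) for n ≥ 1. -/
deriving instance DecidableEq for WTree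

lemma leaves_pos (t : WTree) : 1 ≤ t.leaves := by
  induction t with
  | leaf => simp [WTree.leaves]
  | node r t₁ t₂ ih₁ ih₂ => simp [WTree.leaves]; omega

def F : ℕ → Finset WTree
  | 0 => ∅
  | 1 => {WTree.leaf}
  | (n+2) =>
    (Finset.Icc 1 (n+1)).attach.biUnion fun k =>
      ((Finset.Icc 1 2 ×ˢ F k.1 ×ˢ F (n+2-k.1)).filter
        (fun p => p.2.2 = WTree.leaf → p.1 = 1)).image
        fun p => WTree.node p.1 p.2.1 p.2.2
  decreasing_by
  · have := k.2; rw [Finset.mem_Icc] at this; omega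
  · have := k.2; rw [Finset.mem_Icc] at this; omega

lemma mem_F : ∀ n t, t ∈ F n ↔ (t.wellWeighted ∧ t.leaves = n) := by
  intro n
  induction n using Nat.strong_induction_on with
  | _ n ih =>
    match n with
    | 0 =>
      intro t
      simp only [F, Finset.notMem_empty, false_iff]
      rintro ⟨-, h⟩
      have := leaves_pos t; omega
    | 1 =>
      intro t
      cases t with
      | leaf => simp [F, WTree.wellWeighted, WTree.leaves]
      | node r t₁ t₂ =>
        simp only [F, Finset.mem_singleton]
        constructor
        · intro h; exact absurd h (by simp)
        · rintro ⟨-, h⟩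
          have := leaves_pos t₁; have := leaves_pos t₂
          simp [WTree.leaves] at h; omega
    | (m+2) =>
      intro t
      rw [F]
      simp only [Finset.mem_biUnion, Finset.mem_attach, true_and, Finset.mem_image,
        Finset.mem_filter, Finset.mem_product, Subtype.exists]
      constructor
      · rintro ⟨k, hk, ⟨⟨r, t₁, t₂⟩, ⟨⟨hr, h1, h2⟩, hleaf⟩, rfl⟩⟩
        rw [Finset.mem_Icc] at hk hr
        rw [ih k (by omega) t₁] at h1
        rw [ih (m+2-k) (by omega) t₂] at h2
        refine ⟨⟨by omega, hleaf, h1.1, h2.1⟩, ?_⟩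
        simp [WTree.leaves, h1.2, h2.2]; omega
      · rintro ⟨hw, hl⟩
        cases t with
        | leaf => simp [WTree.leaves] at hl
        | node r t₁ t₂ =>
          obtain ⟨hr, hleaf, h1, h2⟩ := hw
          have l1 := leaves_pos t₁; have l2 := leaves_pos t₂
          simp only [WTree.leaves] at hl
          refine ⟨t₁.leaves, by rw [Finset.mem_Icc]; omega,
            ⟨(r, t₁, t₂), ⟨⟨by rw [Finset.mem_Icc]; omega, ?_, ?_⟩, hleaf⟩, rfl⟩⟩
          · exact (ih t₁.leaves (by omega) t₁).2 ⟨h1, rfl⟩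
          · exact (ih (m+2-t₁.leaves) (by omega) t₂).2 ⟨h2, by omega⟩

lemma wwS_eq (n : ℕ) : wwS n = (F n).card := by
  rw [wwS]
  have : {t : WTree // t.wellWeighted ∧ t.leaves = n} ≃ {t : WTree // t ∈ F n} :=
    Equiv.subtypeEquivRight (fun t => (mem_F n t).symm)
  rw [Nat.card_congr this, Nat.card_eq_fintype_card, Fintype.card_coe]

lemma cardF (n : ℕ) : (F (n+2)).card =
    ∑ k ∈ Finset.Icc 1 (n+1), (F k).card * (F (n+2-k)).card * (if k = n+1 then 1 else 2) := by
  rw [F, Finset.card_biUnion, ← Finset.sum_attach (Finset.Icc 1 (n+1))]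
  · apply Finset.sum_congr rfl
    intro k _
    rw [Finset.card_image_of_injective _ (by intro a b h; simpa [Prod.ext_iff] using h)]
    have hk := k.2; rw [Finset.mem_Icc] at hk
    by_cases hkn : k.1 = n+1
    · -- n+2-k = 1, F 1 = {leaf}, filter forces r = 1
      have e1 : n+2-k.1 = 1 := by omega
      have hF1 : F 1 = {WTree.leaf} := by rw [F]
      rw [if_pos hkn, e1]
      have : (Finset.Icc 1 2 ×ˢ F k.1 ×ˢ F 1).filter
          (fun p => p.2.2 = WTree.leaf → p.1 = 1)
          = {1} ×ˢ F k.1 ×ˢ F 1 := by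
        ext ⟨r, t₁, t₂⟩
        simp only [Finset.mem_filter, Finset.mem_product, Finset.mem_Icc,
          Finset.mem_singleton, hF1]
        constructor
        · rintro ⟨⟨hr, h1, h2⟩, hc⟩
          exact ⟨hc h2, h1, h2⟩
        · rintro ⟨rfl, h1, h2⟩
          exact ⟨⟨by omega, h1, h2⟩, fun _ => rfl⟩
      rw [this]
      simp [Finset.card_product, hF1]
    · -- n+2-k ≥ 2, so t₂ ≠ leaf, filter is everything
      have h2 : 2 ≤ n+2-k.1 := by omega
      have : (Finset.Icc 1 2 ×ˢ F k.1 ×ˢ F (n+2-k.1)).filter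
          (fun p => p.2.2 = WTree.leaf → p.1 = 1)
          = Finset.Icc 1 2 ×ˢ F k.1 ×ˢ F (n+2-k.1) := by
        apply Finset.filter_true_of_mem
        rintro ⟨r, t₁, t₂⟩ hp
        simp only [Finset.mem_product] at hp
        intro hleaf
        exfalso
        have h2' := hp.2.2
        rw [mem_F] at h2'
        obtain rfl : t₂ = WTree.leaf := hleaf
        simp [WTree.leaves] at h2'
        omega
      rw [this, if_neg hkn]
      simp [Finset.card_product]; ring
  · -- pairwise disjoint
    intro a _ b _ hab
    simp only [Finset.disjoint_left]
    rintro t ht ht'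
    simp only [Finset.mem_image, Finset.mem_filter, Finset.mem_product] at ht ht'
    obtain ⟨⟨r, t₁, t₂⟩, ⟨⟨-, h1, -⟩, -⟩, rfl⟩ := ht
    obtain ⟨⟨r', t₁', t₂'⟩, ⟨⟨-, h1', -⟩, -⟩, heq⟩ := ht'
    rw [mem_F] at h1 h1'
    apply hab
    apply Subtype.ext
    injection heq with _ e1 _
    rw [← h1.2, ← h1'.2, e1]


/-- The numbers of well-weighted binary trees satisfy `s(1) = s(2) = 1` and the
convolution recurrence `s(n+1) = 2 Σ_{k=1}^{n} s(k) s(n+1-k) - s(n)` for `n ≥ 1`. -/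
theorem wellWeighted_convolution_recurrence :
    wwS 1 = 1 ∧ wwS 2 = 1 ∧
    ∀ n : ℕ, 1 ≤ n →
      (wwS (n + 1) : ℤ) =
        2 * ∑ k ∈ Finset.Icc 1 n, (wwS k : ℤ) * wwS (n + 1 - k) - wwS n := by
  have hF1 : F 1 = {WTree.leaf} := by rw [F]
  have h1 : wwS 1 = 1 := by rw [wwS_eq, hF1]; rfl
  have h2 : wwS 2 = 1 := by
    rw [wwS_eq, show (2:ℕ) = 0 + 2 from rfl, cardF]
    simp [← wwS_eq, h1]
  refine ⟨h1, h2, ?_⟩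
  intro n hn
  obtain ⟨m, rfl⟩ : ∃ m, n = m + 1 := ⟨n - 1, by omega⟩
  rw [wwS_eq, show m + 1 + 1 = m + 2 from rfl, cardF]
  push_cast
  simp only [← wwS_eq]
  have key : ∀ k ∈ Finset.Icc 1 (m+1), (wwS k:ℤ) * wwS (m+2-k) * (if k = m+1 then 1 else 2)
      = 2 * ((wwS k:ℤ) * wwS (m+2-k)) - (if k = m+1 then (wwS k:ℤ) * wwS (m+2-k) else 0) := by
    intro k _; split <;> ring
  rw [Finset.sum_congr rfl key, Finset.sum_sub_distrib, Finset.sum_ite_eq', ← Finset.mul_sum]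
  simp [Finset.mem_Icc, show m+2-(m+1)=1 by omega, h1]
end

section
/- The little Schröder numbers s(n), defined by s(1)=s(2)=1 and the recurrence 3(2n−1)s(n) = (n+1)s(n+1) + (n−2)s(n−1) for n ≥ 2, satisfy s(n+1) = 2·Σ_{k=1}^{n} s(k)·s(n+1−k) − s(n) for all n ≥ 1. -/
/-!
Shift indices, `a i = s (i + 1)`, so that the claim says that the defect
`e n = a (n + 1) + a n - 2 c n` vanishes, where `c n = ∑_{i + j = n} a i a j`.
Multiplying the three-term recurrence by `a j` and summing over `i + j = m` expresses
`(m + 4) c (m + 2) - 6 (m + 2) c (m + 1) + m c m` through `a`: the weighted sums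
`∑_{i + j = n} i a i a j` that appear equal `n c n / 2` by the symmetry `i ↔ j`.
Combined with the recurrence once more, this shows that `e` satisfies the linear recurrence
`(m + 4) e (m + 2) = 6 (m + 2) e (m + 1) - m e m`, and `e 0 = e 1 = 0`.
-/

open Finset

section

variable {R : Type*} [CommRing R]

def convSquare (a : ℕ → R) (n : ℕ) : R := ∑ p ∈ antidiagonal n, a p.1 * a p.2

theorem two_mul_sum_antidiagonal_affine_mul (a : ℕ → R) (α β : R) (n : ℕ) :
    2 * ∑ p ∈ antidiagonal n, (α * p.1 + β) * (a p.1 * a p.2)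
      = (α * n + 2 * β) * convSquare a n := by
  have hswap : ∑ p ∈ antidiagonal n, (α * p.1 + β) * (a p.1 * a p.2)
      = ∑ p ∈ antidiagonal n, (α * p.2 + β) * (a p.1 * a p.2) := by
    rw [← Nat.sum_antidiagonal_swap]
    exact sum_congr rfl fun p _ => by simp only [Prod.fst_swap, Prod.snd_swap]; ring
  calc 2 * ∑ p ∈ antidiagonal n, (α * p.1 + β) * (a p.1 * a p.2)
      = ∑ p ∈ antidiagonal n,
          ((α * p.1 + β) * (a p.1 * a p.2) + (α * p.2 + β) * (a p.1 * a p.2)) := by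
        rw [sum_add_distrib, ← hswap, two_mul]
    _ = ∑ p ∈ antidiagonal n, (α * n + 2 * β) * (a p.1 * a p.2) :=
        sum_congr rfl fun p hp => by rw [← mem_antidiagonal.mp hp]; push_cast; ring
    _ = (α * n + 2 * β) * convSquare a n := by rw [convSquare, mul_sum]

/-- The recurrence of the little Schröder numbers, shifted so that `a i = s (i + 1)`: this is
`3 (2n - 1) s n = (n + 1) s (n + 1) + (n - 2) s (n - 1)` at `n = i + 2`. -/
def LittleSchroderRec (a : ℕ → R) : Prop :=
  ∀ i : ℕ, ((i : R) + 3) * a (i + 2) = 3 * (2 * i + 3) * a (i + 1) - i * a i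

theorem LittleSchroderRec.convSquare_rec {a : ℕ → R} (ha : LittleSchroderRec a) (h0 : a 0 = 1)
    (h1 : a 1 = 1) (m : ℕ) :
    ((m : R) + 4) * convSquare a (m + 2) - 6 * (m + 2) * convSquare a (m + 1)
      + m * convSquare a m = 2 * a (m + 2) - 2 * a (m + 1) := by
  have hsum : ∑ p ∈ antidiagonal m, ((p.1 : R) + 3) * (a (p.1 + 2) * a p.2)
      = ∑ p ∈ antidiagonal m, (6 * p.1 + 9) * (a (p.1 + 1) * a p.2)
        - ∑ p ∈ antidiagonal m, (p.1 : R) * (a p.1 * a p.2) := by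
    rw [← sum_sub_distrib]
    exact sum_congr rfl fun p _ => by linear_combination a p.2 * ha p.1
  have hshift₁ : ∑ p ∈ antidiagonal (m + 1), (6 * p.1 + 3) * (a p.1 * a p.2)
      = 3 * a (m + 1) + ∑ p ∈ antidiagonal m, (6 * p.1 + 9) * (a (p.1 + 1) * a p.2) := by
    rw [Nat.sum_antidiagonal_succ]
    push_cast
    rw [h0]
    congr 1
    · ring
    · exact sum_congr rfl fun _ _ => by ring
  have hshift₂ : ∑ p ∈ antidiagonal (m + 2), ((p.1 : R) + 1) * (a p.1 * a p.2)
      = a (m + 2) + 2 * a (m + 1)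
        + ∑ p ∈ antidiagonal m, ((p.1 : R) + 3) * (a (p.1 + 2) * a p.2) := by
    rw [Nat.sum_antidiagonal_succ, Nat.sum_antidiagonal_succ]
    push_cast
    rw [h0, h1, ← add_assoc]
    congr 1
    · ring
    · exact sum_congr rfl fun _ _ => by ring
  have w₀ := two_mul_sum_antidiagonal_affine_mul a 1 0 m
  have w₁ := two_mul_sum_antidiagonal_affine_mul a 6 3 (m + 1)
  have w₂ := two_mul_sum_antidiagonal_affine_mul a 1 1 (m + 2)
  simp only [one_mul, add_zero, mul_zero] at w₀ w₂
  push_cast at w₁ w₂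
  linear_combination -w₂ + w₁ - w₀ + 2 * hshift₂ - 2 * hshift₁ + 2 * hsum

def convDefect (a : ℕ → R) (n : ℕ) : R := a (n + 1) + a n - 2 * convSquare a n

theorem LittleSchroderRec.convDefect_rec {a : ℕ → R} (ha : LittleSchroderRec a) (h0 : a 0 = 1)
    (h1 : a 1 = 1) (m : ℕ) :
    ((m : R) + 4) * convDefect a (m + 2)
      = 6 * (m + 2) * convDefect a (m + 1) - m * convDefect a m := by
  have hm₁ := ha (m + 1)
  push_cast at hm₁
  unfold convDefect
  linear_combination -2 * ha.convSquare_rec h0 h1 m + hm₁ + ha m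

theorem LittleSchroderRec.convDefect_eq_zero [IsDomain R] [CharZero R] {a : ℕ → R}
    (ha : LittleSchroderRec a) (h0 : a 0 = 1) (h1 : a 1 = 1) (n : ℕ) : convDefect a n = 0 := by
  induction n using Nat.twoStepInduction with
  | zero =>
    simp [convDefect, convSquare, h0, h1]
    norm_num
  | one =>
    have h2 : a 2 = 3 := by simpa [h1] using ha 0
    simp [convDefect, convSquare, Nat.sum_antidiagonal_succ, h0, h1, h2]
    norm_num
  | more m hm hm₁ =>
    have hrec := ha.convDefect_rec h0 h1 m
    rw [hm, hm₁, mul_zero, mul_zero, sub_zero] at hrec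
    exact (mul_eq_zero.mp hrec).resolve_left (by exact_mod_cast (m + 3).succ_ne_zero)

theorem sum_Icc_mul_eq_convSquare (s : ℕ → R) (m : ℕ) :
    ∑ k ∈ Icc 1 (m + 1), s k * s (m + 2 - k) = convSquare (fun i => s (i + 1)) m := by
  rw [convSquare, Nat.sum_antidiagonal_eq_sum_range_succ (fun i j => s (i + 1) * s (j + 1)),
    ← Ico_add_one_right_eq_Icc, sum_Ico_eq_sum_range]
  refine sum_congr rfl fun k hk => ?_
  rw [mem_range] at hk
  rw [add_comm 1 k, show m + 2 - (k + 1) = m - k + 1 by omega]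

end

/-- If `s(1) = s(2) = 1` and `3(2n-1) s(n) = (n+1) s(n+1) + (n-2) s(n-1)` for `n ≥ 2`,
then `s(n+1) = 2 Σ_{k=1}^{n} s(k) s(n+1-k) - s(n)` for all `n ≥ 1`. -/
theorem three_term_implies_convolution (s : ℕ → ℚ)
    (h1 : s 1 = 1) (h2 : s 2 = 1)
    (hrec : ∀ n : ℕ, 2 ≤ n →
      3 * (2 * (n : ℚ) - 1) * s n = ((n : ℚ) + 1) * s (n + 1) + ((n : ℚ) - 2) * s (n - 1)) :
    ∀ n : ℕ, 1 ≤ n →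
      s (n + 1) = 2 * ∑ k ∈ Finset.Icc 1 n, s k * s (n + 1 - k) - s n := by
  have ha : LittleSchroderRec (fun i => s (i + 1)) := fun i => by
    have hi := hrec (i + 2) (by omega)
    rw [show i + 2 - 1 = i + 1 by omega] at hi
    push_cast at hi
    linear_combination -hi
  intro n hn
  obtain ⟨m, rfl⟩ := Nat.exists_eq_add_of_le' hn
  have hd := ha.convDefect_eq_zero h1 h2 m
  rw [convDefect] at hd
  rw [sum_Icc_mul_eq_convSquare]
  linear_combination hd
end

section
/- For every n ≥ 1 there is a bijection between {1,2} × (pointed binary plane trees with n leaves) and leaf-pointed binary plane trees with n+1 leaves (Rémy's bijection). -/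
/-!
Inserting a new leaf immediately to the left or to the right of the distinguished node of a
pointed tree, and pointing at that new leaf, yields a leaf-pointed tree with one more leaf which
is not a single leaf. The insertion is undone by deleting the distinguished leaf and contracting
its parent onto the sibling subtree, which also tells on which side the leaf had been inserted.
-/

/-- Binary plane trees: a single leaf, or an ordered pair of two binary plane trees. -/
inductive BTree : Type
  | leaf : BTree
  | node : BTree → BTree → BTree

def BTree.leaves : BTree → ℕ
  | .leaf => 1
  | .node t₁ t₂ => t₁.leaves + t₂.leaves

def BTree.interior : BTree → ℕ
  | .leaf => 0
  | .node t₁ t₂ => 1 + t₁.interior + t₂.interior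

def BTree.nodes : BTree → ℕ
  | .leaf => 1
  | .node t₁ t₂ => 1 + t₁.nodes + t₂.nodes

/-- Nodes of a binary plane tree, as paths from the root. -/
inductive BPath : BTree → Type
  | root (t : BTree) : BPath t
  | left {t₁ t₂ : BTree} : BPath t₁ → BPath (.node t₁ t₂)
  | right {t₁ t₂ : BTree} : BPath t₂ → BPath (.node t₁ t₂)

def BPath.target : {t : BTree} → BPath t → BTree
  | _, .root t => t
  | _, .left p => p.target
  | _, .right p => p.target

abbrev PointedTree : Type := Σ t : BTree, BPath t

theorem BTree.ne_leaf_of_one_lt_leaves {t : BTree} (h : 1 < t.leaves) : t ≠ .leaf := by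
  rintro rfl
  exact h.ne rfl

namespace BPath

/-- `insertLeaf true` puts the new leaf to the left of the distinguished node,
`insertLeaf false` to its right; the result is pointed at the new leaf. -/
def insertLeaf (b : Bool) : {t : BTree} → BPath t → PointedTree
  | _, .root t =>
    bif b then ⟨.node .leaf t, .left (.root .leaf)⟩
    else ⟨.node t .leaf, .right (.root .leaf)⟩
  | _, @left _ t₂ p => ⟨.node (p.insertLeaf b).1 t₂, .left (p.insertLeaf b).2⟩
  | _, @right t₁ _ p => ⟨.node t₁ (p.insertLeaf b).1, .right (p.insertLeaf b).2⟩

/-- Meaningful only on paths to a leaf of a tree other than `.leaf`. -/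
def deleteLeaf : {t : BTree} → BPath t → Bool × PointedTree
  | _, .root t => (true, ⟨t, .root t⟩)
  | _, @left .leaf t₂ (.root _) => (true, ⟨t₂, .root t₂⟩)
  | _, @right t₁ .leaf (.root _) => (false, ⟨t₁, .root t₁⟩)
  | _, @left (.node _ _) t₂ p =>
    ((deleteLeaf p).1, ⟨.node (deleteLeaf p).2.1 t₂, .left (deleteLeaf p).2.2⟩)
  | _, @right t₁ (.node _ _) p =>
    ((deleteLeaf p).1, ⟨.node t₁ (deleteLeaf p).2.1, .right (deleteLeaf p).2.2⟩)

variable {t t₁ t₂ : BTree}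

theorem leaves_insertLeaf (b : Bool) (p : BPath t) : (p.insertLeaf b).1.leaves = t.leaves + 1 := by
  induction p with
  | root t => cases b <;> simp only [insertLeaf, BTree.leaves, cond, Nat.add_comm]
  | left p ih | right p ih => simp only [insertLeaf, BTree.leaves, ih]; omega

theorem target_insertLeaf (b : Bool) (p : BPath t) : (p.insertLeaf b).2.target = .leaf := by
  induction p with
  | root t => cases b <;> rfl
  | left p ih | right p ih => exact ih

theorem insertLeaf_ne_leaf (b : Bool) (p : BPath t) : (p.insertLeaf b).1 ≠ .leaf := by
  cases p <;> cases b <;> nofun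

theorem deleteLeaf_left (p : BPath t₁) (h : t₁ ≠ .leaf) :
    (p.left (t₂ := t₂)).deleteLeaf =
      (p.deleteLeaf.1, ⟨.node p.deleteLeaf.2.1 t₂, .left p.deleteLeaf.2.2⟩) := by
  cases t₁ with
  | leaf => exact absurd rfl h
  | node => rfl

theorem deleteLeaf_right (p : BPath t₂) (h : t₂ ≠ .leaf) :
    (p.right (t₁ := t₁)).deleteLeaf =
      (p.deleteLeaf.1, ⟨.node t₁ p.deleteLeaf.2.1, .right p.deleteLeaf.2.2⟩) := by
  cases t₂ with
  | leaf => exact absurd rfl h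
  | node => rfl

theorem deleteLeaf_insertLeaf (b : Bool) (p : BPath t) :
    (p.insertLeaf b).2.deleteLeaf = (b, ⟨t, p⟩) := by
  induction p with
  | root t => cases b <;> rfl
  | left p ih =>
    simp only [insertLeaf]
    rw [deleteLeaf_left _ (insertLeaf_ne_leaf b p), ih]
  | right p ih =>
    simp only [insertLeaf]
    rw [deleteLeaf_right _ (insertLeaf_ne_leaf b p), ih]

theorem insertLeaf_deleteLeaf (p : BPath t) (ht : t ≠ .leaf) (hp : p.target = .leaf) :
    p.deleteLeaf.2.2.insertLeaf p.deleteLeaf.1 = ⟨t, p⟩ := by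
  induction p with
  | root t => exact absurd hp ht
  | @left t₁ t₂ p ih =>
    cases t₁ with
    | leaf => cases p; rfl
    | node => simp only [deleteLeaf, insertLeaf]; rw [ih nofun hp]
  | @right t₁ t₂ p ih =>
    cases t₂ with
    | leaf => cases p; rfl
    | node => simp only [deleteLeaf, insertLeaf]; rw [ih nofun hp]

end BPath

open BPath

def remyEquiv :
    Bool × PointedTree ≃ {x : PointedTree // x.1 ≠ .leaf ∧ x.2.target = .leaf} where
  toFun x := ⟨x.2.2.insertLeaf x.1, insertLeaf_ne_leaf _ _, target_insertLeaf _ _⟩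
  invFun x := x.1.2.deleteLeaf
  left_inv := fun ⟨b, _, p⟩ => deleteLeaf_insertLeaf b p
  right_inv := fun ⟨⟨_, p⟩, ht, hp⟩ => Subtype.ext (insertLeaf_deleteLeaf p ht hp)

theorem leaves_remyEquiv (x : Bool × PointedTree) : (remyEquiv x).1.1.leaves = x.2.1.leaves + 1 :=
  leaves_insertLeaf _ _

/-- Rémy's bijection: for every `n ≥ 1` there is a bijection between
`{1,2} × (pointed binary plane trees with n leaves)` and leaf-pointed binary
plane trees with `n+1` leaves. -/
theorem remy_bijection (n : ℕ) (hn : 1 ≤ n) :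
    Nonempty ((Fin 2 × {x : Σ t : BTree, BPath t // x.1.leaves = n}) ≃
      {x : Σ t : BTree, BPath t // x.1.leaves = n + 1 ∧ x.2.target = .leaf}) := by
  have pairs : Bool × {x : PointedTree // x.1.leaves = n} ≃
      {y : Bool × PointedTree // y.2.1.leaves = n} :=
    ((Equiv.subtypeProdEquivSigmaSubtype fun (_ : Bool) (x : PointedTree) => x.1.leaves = n).trans
      (Equiv.sigmaEquivProd _ _)).symm
  have leaf_pointed : ∀ x : PointedTree,
      (x.1 ≠ .leaf ∧ x.2.target = .leaf) ∧ x.1.leaves = n + 1 ↔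
        x.1.leaves = n + 1 ∧ x.2.target = .leaf := fun x =>
    ⟨fun h => ⟨h.2, h.1.2⟩,
      fun h => ⟨⟨BTree.ne_leaf_of_one_lt_leaves (by omega), h.2⟩, h.1⟩⟩
  exact ⟨(finTwoEquiv.prodCongr (Equiv.refl _)).trans <| pairs.trans <|
    (remyEquiv.subtypeEquiv fun y => by rw [leaves_remyEquiv]; omega).trans <|
    (Equiv.subtypeSubtypeEquivSubtypeInter _ _).trans (Equiv.subtypeEquivRight leaf_pointed)⟩
end

section
/- The number of well-weighted binary trees with n leaves equals the little Schröder number s(n) satisfying s(1)=s(2)=1 and 3(2n−1)s(n) = (n+1)s(n+1) + (n−2)s(n−1) for n ≥ 2. -/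
/-!
Cutting a tree at its root, a weight `r ∈ {1, 2}` and a pair `(t₁, t₂)` of well-weighted trees give
the tree `[r; t₁, t₂]`, except when `r = 2` and `t₂` is a leaf; sending that exceptional triple to
`t₁` instead is a bijection onto the trees with `n` leaves together with those with `n - 1` leaves.
So the generating function `F = ∑ wwS n Xⁿ` satisfies `2F² = (1 + X)F - X`. Differentiating and
eliminating the quadratic terms between the two equations gives
`(1 - 6X + X²)F' = (X - 3)F + (1 - X)`, whose coefficients are the three-term recurrence, and that
recurrence determines a sequence from its values at `1` and `2`.
-/

open Finset PowerSeries

theorem WTree.one_le_leaves : ∀ t : WTree, 1 ≤ t.leaves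
  | .leaf => le_rfl
  | .node _ t₁ _ => (one_le_leaves t₁).trans (Nat.le_add_right _ _)

theorem WTree.finite_setOf_wellWeighted_leaves_eq (n : ℕ) :
    {t : WTree | t.wellWeighted ∧ t.leaves = n}.Finite := by
  induction n using Nat.strong_induction_on with
  | _ n ih =>
  have hsub : ∀ i ∈ Set.Ioo 0 n, n - i < n := fun i hi => Nat.sub_lt_self hi.1 hi.2.le
  refine ((Set.finite_singleton leaf).union <| (Set.finite_Ioo 0 n).biUnion fun i hi =>
    ((Set.toFinite ({1, 2} : Set ℕ)).prod ((ih i hi.2).prod (ih (n - i) (hsub i hi)))).image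
      fun x => node x.1 x.2.1 x.2.2).subset ?_
  rintro (_ | ⟨r, t₁, t₂⟩) ⟨⟨hr, -, hw₁, hw₂⟩, hl⟩
  · exact Or.inl rfl
  · have := t₁.one_le_leaves
    have := t₂.one_le_leaves
    simp only [leaves] at hl
    refine Or.inr <| Set.mem_biUnion (x := t₁.leaves) ⟨by omega, by omega⟩ ⟨⟨r, t₁, t₂⟩, ?_, rfl⟩
    exact ⟨hr, ⟨hw₁, rfl⟩, hw₂, show t₂.leaves = n - t₁.leaves by omega⟩

abbrev WellWeightedTree (n : ℕ) := {t : WTree // t.wellWeighted ∧ t.leaves = n}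

namespace WellWeightedTree

instance (n : ℕ) : Finite (WellWeightedTree n) :=
  (WTree.finite_setOf_wellWeighted_leaves_eq n).to_subtype

theorem natCard_eq (n : ℕ) : Nat.card (WellWeightedTree n) = wwS n := rfl

open Classical in
noncomputable def join (n : ℕ) :
    (Σ p : antidiagonal n, Bool × WellWeightedTree p.1.1 × WellWeightedTree p.1.2) →
      WellWeightedTree n ⊕ WellWeightedTree (n - 1)
  | ⟨p, b, t₁, t₂⟩ =>
    have hl : t₁.1.leaves + t₂.1.leaves = n := by
      rw [t₁.2.2, t₂.2.2]
      exact mem_antidiagonal.1 p.2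
    if h : b = true ∧ t₂.1 = .leaf then
      .inr ⟨t₁.1, t₁.2.1, by rw [h.2] at hl; exact Nat.eq_sub_of_add_eq hl⟩
    else
      .inl ⟨.node (if b then 2 else 1) t₁.1 t₂.1,
        ⟨by split <;> simp, fun h₂ => by simp_all, t₁.2.1, t₂.2.1⟩, hl⟩

theorem join_injective (n : ℕ) : Function.Injective (join n) := by
  rintro ⟨⟨⟨i, j⟩, hij⟩, b, ⟨t₁, hw₁, hl₁⟩, ⟨t₂, hw₂, hl₂⟩⟩
    ⟨⟨⟨i', j'⟩, hij'⟩, b', ⟨t₁', hw₁', hl₁'⟩, ⟨t₂', hw₂', hl₂'⟩⟩ h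
  dsimp only at hl₁ hl₂ hl₁' hl₂'
  subst hl₁ hl₂ hl₁' hl₂'
  by_cases H : b = true ∧ t₂ = .leaf <;> by_cases H' : b' = true ∧ t₂' = .leaf
  · simp only [join, dif_pos H, dif_pos H', Sum.inr.injEq, Subtype.mk.injEq] at h
    obtain ⟨rfl, rfl⟩ := H
    obtain ⟨rfl, rfl⟩ := H'
    subst h
    rfl
  · simp [join, dif_pos H, dif_neg H'] at h
  · simp [join, dif_neg H, dif_pos H'] at h
  · simp only [join, dif_neg H, dif_neg H', Sum.inl.injEq, Subtype.mk.injEq, WTree.node.injEq] at h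
    obtain ⟨hb, rfl, rfl⟩ := h
    obtain rfl : b = b' := by cases b <;> cases b' <;> simp_all
    rfl

theorem join_surjective {n : ℕ} (hn : 2 ≤ n) : Function.Surjective (join n) := by
  rintro (⟨_ | ⟨r, t₁, t₂⟩, hw, rfl⟩ | ⟨t, hw, hl⟩)
  · simp [WTree.leaves] at hn
  · obtain ⟨hr, hleaf, hw₁, hw₂⟩ := hw
    refine ⟨⟨⟨(t₁.leaves, t₂.leaves), mem_antidiagonal.2 rfl⟩, decide (r = 2),
      ⟨t₁, hw₁, rfl⟩, ⟨t₂, hw₂, rfl⟩⟩, ?_⟩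
    rw [join, dif_neg (by grind)]
    rcases hr with rfl | rfl <;> rfl
  · refine ⟨⟨⟨(n - 1, 1), mem_antidiagonal.2 (by omega)⟩, true, ⟨t, hw, hl⟩,
      ⟨.leaf, trivial, rfl⟩⟩, ?_⟩
    simp [join]

end WellWeightedTree

theorem wwS_zero : wwS 0 = 0 :=
  have : IsEmpty (WellWeightedTree 0) := ⟨fun t => by have := t.1.one_le_leaves; omega⟩
  Nat.card_of_isEmpty

theorem wwS_one : wwS 1 = 1 := by
  refine Nat.card_eq_one_iff_exists.2 ⟨⟨.leaf, trivial, rfl⟩, ?_⟩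
  rintro ⟨_ | ⟨r, t₁, t₂⟩, -, hl⟩
  · rfl
  · have := t₁.one_le_leaves
    have := t₂.one_le_leaves
    simp only [WTree.leaves] at hl
    omega

theorem wwS_add_wwS_sub_one {n : ℕ} (hn : 2 ≤ n) :
    wwS n + wwS (n - 1) = 2 * ∑ p ∈ antidiagonal n, wwS p.1 * wwS p.2 := by
  rw [← WellWeightedTree.natCard_eq, ← WellWeightedTree.natCard_eq, ← Nat.card_sum,
    ← Nat.card_eq_of_bijective _
      ⟨WellWeightedTree.join_injective n, WellWeightedTree.join_surjective hn⟩,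
    Nat.card_sigma, mul_sum]
  simp only [univ_eq_attach, Nat.card_prod, Nat.card_eq_fintype_card, Fintype.card_bool,
    WellWeightedTree.natCard_eq]
  exact sum_attach (antidiagonal n) fun p => 2 * (wwS p.1 * wwS p.2)

theorem wwS_two : wwS 2 = 1 := by
  have h := wwS_add_wwS_sub_one le_rfl
  rw [Nat.sum_antidiagonal_succ, Nat.sum_antidiagonal_succ, Nat.antidiagonal_zero,
    sum_singleton] at h
  simp only [zero_add, Nat.reduceAdd, Nat.reduceSub, wwS_zero, wwS_one] at h
  omega

namespace PowerSeries

variable {R : Type*} [CommRing R]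

theorem mul_derivative_eq_of_two_mul_sq_eq {F : R⟦X⟧} (hF : 2 * F ^ 2 = (1 + X) * F - X) :
    (1 - 6 * X + X ^ 2) * d⁄dX R F = (X - 3) * F + (1 - X) := by
  have hF' : 4 * F * d⁄dX R F = F + (1 + X) * d⁄dX R F - 1 := by
    have := congrArg (d⁄dX R) (show F * F + F * F = F + X * F - X by linear_combination hF)
    simp only [map_add, map_sub, Derivation.leibniz, derivative_X, smul_eq_mul] at this
    linear_combination this
  linear_combination (2 - 8 * d⁄dX R F) * hF + (4 * F - 1 - X) * hF'

theorem coeff_recurrence_of_mul_derivative_eq {F : R⟦X⟧}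
    (hF : (1 - 6 * X + X ^ 2) * d⁄dX R F = (X - 3) * F + (1 - X)) (m : ℕ) :
    (m + 3) * coeff (m + 3) F + m * coeff (m + 1) F = 3 * (2 * m + 3) * coeff (m + 2) F := by
  have h : d⁄dX R F + X * (X * d⁄dX R F) + C 3 * F + X = C 6 * (X * d⁄dX R F) + X * F + 1 := by
    rw [map_ofNat, map_ofNat]
    linear_combination hF
  have := congrArg (coeff (m + 2)) h
  simp only [map_add, coeff_succ_X_mul, coeff_C_mul, coeff_derivative, coeff_X, coeff_one] at this
  push_cast at this ⊢
  linear_combination this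

end PowerSeries

noncomputable def wwSeries : ℤ⟦X⟧ := mk fun n => (wwS n : ℤ)

theorem two_mul_wwSeries_sq : 2 * wwSeries ^ 2 = (1 + X) * wwSeries - X := by
  ext n
  rw [two_mul, map_add, sq, coeff_mul, map_sub, add_mul, one_mul, map_add]
  obtain _ | _ | n := n
  · simp [wwSeries, wwS_zero]
  · simp [wwSeries, Nat.antidiagonal_succ, wwS_zero, wwS_one]
  · simp only [wwSeries, coeff_mk, coeff_succ_X_mul, coeff_X, Nat.reduceEqDiff, if_false,
      sub_zero, ← two_mul]
    exact_mod_cast (wwS_add_wwS_sub_one (n := n + 2) le_add_self).symm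

def SatisfiesSchroederRecurrence (s : ℕ → ℕ) : Prop :=
  ∀ n : ℕ, 2 ≤ n → 3 * (2 * n - 1) * s n = (n + 1) * s (n + 1) + (n - 2) * s (n - 1)

theorem satisfiesSchroederRecurrence_wwS : SatisfiesSchroederRecurrence wwS := by
  intro n hn
  obtain ⟨m, rfl⟩ := Nat.exists_eq_add_of_le' hn
  have := coeff_recurrence_of_mul_derivative_eq
    (mul_derivative_eq_of_two_mul_sq_eq two_mul_wwSeries_sq) m
  simp only [wwSeries, coeff_mk] at this
  rw [show 2 * (m + 2) - 1 = 2 * m + 3 by omega, Nat.add_sub_cancel,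
    show m + 2 - 1 = m + 1 from rfl]
  exact_mod_cast this.symm

theorem SatisfiesSchroederRecurrence.unique {s t : ℕ → ℕ} (hs : SatisfiesSchroederRecurrence s)
    (ht : SatisfiesSchroederRecurrence t) (h1 : s 1 = t 1) (h2 : s 2 = t 2) :
    ∀ n, 1 ≤ n → s n = t n := by
  intro n
  induction n using Nat.strong_induction_on with
  | _ n ih =>
  match n with
  | 0 => simp
  | 1 => exact fun _ => h1
  | 2 => exact fun _ => h2
  | m + 3 =>
    intro _
    have hs' := hs (m + 2) (by omega)
    have ht' := ht (m + 2) (by omega)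
    rw [show m + 2 - 1 = m + 1 from rfl] at hs' ht'
    rw [ih (m + 2) (by omega) (by omega), ih (m + 1) (by omega) (by omega)] at hs'
    have : (m + 3) * s (m + 3) = (m + 3) * t (m + 3) := by linarith
    exact Nat.eq_of_mul_eq_mul_left (by omega) this

/-- The number of well-weighted binary trees with `n` leaves is the little Schröder
number `s(n)` determined by `s(1) = s(2) = 1` and the three-term recurrence
`3(2n-1) s(n) = (n+1) s(n+1) + (n-2) s(n-1)` for `n ≥ 2`. -/
theorem card_wellWeighted_eq_schroeder (s : ℕ → ℕ)
    (h1 : s 1 = 1) (h2 : s 2 = 1)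
    (hrec : ∀ n : ℕ, 2 ≤ n →
      3 * (2 * n - 1) * s n = (n + 1) * s (n + 1) + (n - 2) * s (n - 1)) :
    ∀ n : ℕ, 1 ≤ n → wwS n = s n :=
  satisfiesSchroederRecurrence_wwS.unique hrec (wwS_one.trans h1.symm) (wwS_two.trans h2.symm)
end
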